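/- arXiv:2204.08591 — 5 statements merged into one kernel-verified Lean document; each statement's English description precedes it below -/
import Mathlib

section
/- (Lemma 2.17) Let ρ be an alternating 4-form on ℝ⁷, h a symmetric bilinear form and X a vector such that, in components with respect to the standard basis, 2ρ_{ijkl} = Σ_{p=1}^7 ( h_{ip}ψ_{pjkl} + h_{jp}ψ_{ipkl} + h_{kp}ψ_{ijpl} + h_{lp}ψ_{ijkp} ) + X_i φ_{jkl} − X_j φ_{ikl} + X_k φ_{ijl} − X_l φ_{ijk} for all i,j,k,l. Define the 2-tensor ρ̂ by ρ̂_{pq} = Σ_{i,j,k=1}^7 ρ_{pijk} ψ_{qijk}. Then h_{il} = (1/12)(ρ̂_{il} + ρ̂_{li}) − (1/48)(Σ_{m=1}^7 ρ̂_{mm}) δ_{il} for all i,l. -/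
open scoped RealInnerProductSpace

noncomputable section

abbrev E7 : Type := EuclideanSpace ℝ (Fin 7)

/-- The standard orthonormal basis vectors of ℝ⁷. -/
def e7 (i : Fin 7) : E7 := EuclideanSpace.single i 1

/-- Kronecker delta. -/
def kd7 (i j : Fin 7) : ℝ := if i = j then 1 else 0

/-- `e^{abc}(e_i, e_j, e_k)` : component of a wedge of three dual basis covectors. -/
def trip7 (a b c i j k : Fin 7) : ℝ :=
  Matrix.det !![kd7 a i, kd7 a j, kd7 a k;
                kd7 b i, kd7 b j, kd7 b k;
                kd7 c i, kd7 c j, kd7 c k]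

/-- `e^{abcd}(e_i, e_j, e_k, e_l)` : component of a wedge of four dual basis covectors. -/
def quad7 (a b c d i j k l : Fin 7) : ℝ :=
  Matrix.det !![kd7 a i, kd7 a j, kd7 a k, kd7 a l;
                kd7 b i, kd7 b j, kd7 b k, kd7 b l;
                kd7 c i, kd7 c j, kd7 c k, kd7 c l;
                kd7 d i, kd7 d j, kd7 d k, kd7 d l]

/-- Components `φ_{ijk}` of the standard G₂ 3-form
`φ = e¹²³ + e¹⁴⁵ − e¹⁶⁷ + e²⁴⁶ − e²⁷⁵ + e³⁴⁷ − e³⁵⁶` (indices shifted to be 0-based). -/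
def phiC (i j k : Fin 7) : ℝ :=
  trip7 0 1 2 i j k + trip7 0 3 4 i j k - trip7 0 5 6 i j k
  + trip7 1 3 5 i j k - trip7 1 6 4 i j k + trip7 2 3 6 i j k - trip7 2 4 5 i j k

/-- Components `ψ_{ijkl}` of the Hodge dual 4-form
`ψ = e⁴⁵⁶⁷ − e²³⁴⁵ + e²³⁶⁷ − e³¹⁴⁶ + e³¹⁷⁵ − e¹²⁴⁷ + e¹²⁵⁶` (0-based). -/
def psiC (i j k l : Fin 7) : ℝ :=
  quad7 3 4 5 6 i j k l - quad7 1 2 3 4 i j k l + quad7 1 2 5 6 i j k l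
  - quad7 2 0 3 5 i j k l + quad7 2 0 6 4 i j k l
  - quad7 0 1 3 6 i j k l + quad7 0 1 4 5 i j k l

/-- The standard G₂ 3-form evaluated on arbitrary vectors. -/
def phi7 (x y z : E7) : ℝ := ∑ i, ∑ j, ∑ k, x i * y j * z k * phiC i j k

/-- The 4-form ψ evaluated on arbitrary vectors. -/
def psi7 (x y z w : E7) : ℝ :=
  ∑ i, ∑ j, ∑ k, ∑ l, x i * y j * z k * w l * psiC i j k l

/-- The cross product on ℝ⁷, characterized by `⟨x × y, z⟩ = φ(x,y,z)`. -/
def cross7 (x y : E7) : E7 := (WithLp.equiv 2 (Fin 7 → ℝ)).symm fun k => phi7 x y (e7 k)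

/-- The vector-valued 3-form χ, characterized by `⟨χ(x,y,z), w⟩ = ψ(x,y,z,w)`. -/
def chi7 (x y z : E7) : E7 := (WithLp.equiv 2 (Fin 7 → ℝ)).symm fun l => psi7 x y z (e7 l)

/-- `ρ̂_{pq} = Σ_{i,j,k} ρ_{pijk} ψ_{qijk}`. -/
def rhoHat (ρ : AlternatingMap ℝ E7 ℝ (Fin 4)) (p q : Fin 7) : ℝ :=
  ∑ i, ∑ j, ∑ k, ρ ![e7 p, e7 i, e7 j, e7 k] * psiC q i j k

/-!
Contract `2ρ = h ⋄ ψ + X ∧ φ` against `ψ` on the last three indices. The two G₂ contraction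
identities `∑_{jk} ψ_{pmjk} ψ_{qijk} = 4 δ_{pq} δ_{mi} - 4 δ_{pi} δ_{mq} - 2 ψ_{pmqi}` and
`∑_{jk} φ_{pjk} ψ_{qajk} = -4 φ_{pqa}`, together with the antisymmetry of `φ` and `ψ` and the
symmetry of `h`, give `ρ̂_{pq} = 6 h_{pq} + 6 (tr h) δ_{pq} + 6 ∑_a X_a φ_{pqa}`. The last term is
antisymmetric in `p, q`, so `ρ̂ + ρ̂ᵀ = 12 h + 12 (tr h) δ` and `tr ρ̂ = 48 tr h`.
-/

namespace G2

/-! Integer copies of `kd7`, `trip7`, `quad7`, `phiC`, `psiC` with the determinants expanded, so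
that the kernel can check the two contraction identities by evaluation. -/

def kronZ (i j : Fin 7) : ℤ := if i = j then 1 else 0

def wedge3Z (a b c i j k : Fin 7) : ℤ :=
  kronZ a i * (kronZ b j * kronZ c k - kronZ b k * kronZ c j)
  - kronZ a j * (kronZ b i * kronZ c k - kronZ b k * kronZ c i)
  + kronZ a k * (kronZ b i * kronZ c j - kronZ b j * kronZ c i)

def wedge4Z (a b c d i j k l : Fin 7) : ℤ :=
  kronZ a i * wedge3Z b c d j k l - kronZ a j * wedge3Z b c d i k l
  + kronZ a k * wedge3Z b c d i j l - kronZ a l * wedge3Z b c d i j k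

def phiZ (i j k : Fin 7) : ℤ :=
  wedge3Z 0 1 2 i j k + wedge3Z 0 3 4 i j k - wedge3Z 0 5 6 i j k
  + wedge3Z 1 3 5 i j k - wedge3Z 1 6 4 i j k + wedge3Z 2 3 6 i j k - wedge3Z 2 4 5 i j k

def psiZ (i j k l : Fin 7) : ℤ :=
  wedge4Z 3 4 5 6 i j k l - wedge4Z 1 2 3 4 i j k l + wedge4Z 1 2 5 6 i j k l
  - wedge4Z 2 0 3 5 i j k l + wedge4Z 2 0 6 4 i j k l
  - wedge4Z 0 1 3 6 i j k l + wedge4Z 0 1 4 5 i j k l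

lemma kd7_eq_cast (i j : Fin 7) : kd7 i j = kronZ i j := by
  unfold kd7 kronZ; split_ifs <;> norm_num

lemma trip7_eq_cast (a b c i j k : Fin 7) : trip7 a b c i j k = wedge3Z a b c i j k := by
  simp [trip7, wedge3Z, Matrix.det_fin_three, kd7_eq_cast]
  ring

lemma quad7_eq_cast (a b c d i j k l : Fin 7) :
    quad7 a b c d i j k l = wedge4Z a b c d i j k l := by
  simp [quad7, Matrix.det_succ_row_zero, Fin.sum_univ_succ, Fin.succAbove, wedge4Z, wedge3Z,
    kd7_eq_cast]
  ring

lemma phiC_eq_cast (i j k : Fin 7) : phiC i j k = phiZ i j k := by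
  simp only [phiC, phiZ, trip7_eq_cast]
  push_cast
  ring

lemma psiC_eq_cast (i j k l : Fin 7) : psiC i j k l = psiZ i j k l := by
  simp only [psiC, psiZ, quad7_eq_cast]
  push_cast
  ring

lemma wedge3Z_swap_12 (a b c i j k : Fin 7) : wedge3Z a b c i j k = -wedge3Z a b c j i k := by
  unfold wedge3Z; ring

lemma wedge3Z_swap_23 (a b c i j k : Fin 7) : wedge3Z a b c i j k = -wedge3Z a b c i k j := by
  unfold wedge3Z; ring

lemma wedge4Z_swap_23 (a b c d i j k l : Fin 7) :
    wedge4Z a b c d i j k l = -wedge4Z a b c d i k j l := by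
  unfold wedge4Z wedge3Z; ring

lemma wedge4Z_swap_24 (a b c d i j k l : Fin 7) :
    wedge4Z a b c d i j k l = -wedge4Z a b c d i l k j := by
  unfold wedge4Z wedge3Z; ring

lemma phiC_swap_12 (i j k : Fin 7) : phiC i j k = -phiC j i k := by
  simp only [phiC_eq_cast, phiZ, wedge3Z_swap_12 _ _ _ i j k]
  push_cast
  ring

lemma phiC_swap_23 (i j k : Fin 7) : phiC i j k = -phiC i k j := by
  simp only [phiC_eq_cast, phiZ, wedge3Z_swap_23 _ _ _ i j k]
  push_cast
  ring

lemma phiC_self (i k : Fin 7) : phiC i i k = 0 := by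
  linarith [phiC_swap_12 i i k]

lemma psiC_swap_23 (i j k l : Fin 7) : psiC i j k l = -psiC i k j l := by
  simp only [psiC_eq_cast, psiZ, wedge4Z_swap_23 _ _ _ _ i j k l]
  push_cast
  ring

lemma psiC_swap_24 (i j k l : Fin 7) : psiC i j k l = -psiC i l k j := by
  simp only [psiC_eq_cast, psiZ, wedge4Z_swap_24 _ _ _ _ i j k l]
  push_cast
  ring

lemma sum_psiZ_mul_psiZ : ∀ p m q i : Fin 7,
    ∑ j, ∑ k, psiZ p m j k * psiZ q i j k
      = 4 * kronZ p q * kronZ m i - 4 * kronZ p i * kronZ m q - 2 * psiZ p m q i := by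
  simp only [Fin.sum_univ_seven]
  decide +kernel

lemma sum_phiZ_mul_psiZ : ∀ p q a : Fin 7,
    ∑ j, ∑ k, phiZ p j k * psiZ q a j k = -4 * phiZ p q a := by
  simp only [Fin.sum_univ_seven]
  decide +kernel

lemma sum_psiC_mul_psiC (p m q i : Fin 7) :
    ∑ j, ∑ k, psiC p m j k * psiC q i j k
      = 4 * kd7 p q * kd7 m i - 4 * kd7 p i * kd7 m q - 2 * psiC p m q i := by
  simp only [psiC_eq_cast, kd7_eq_cast]
  exact_mod_cast sum_psiZ_mul_psiZ p m q i

lemma sum_phiC_mul_psiC (p q a : Fin 7) :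
    ∑ j, ∑ k, phiC p j k * psiC q a j k = -4 * phiC p q a := by
  simp only [phiC_eq_cast, psiC_eq_cast]
  exact_mod_cast sum_phiZ_mul_psiZ p q a

lemma sum_kd7_mul (i : Fin 7) (f : Fin 7 → ℝ) : ∑ j, kd7 i j * f j = f i := by
  simp [kd7]

lemma sum_mul_kd7 (i : Fin 7) (f : Fin 7 → ℝ) : ∑ j, f j * kd7 j i = f i := by
  simp [kd7, eq_comm]

lemma sum3_psiC_mul_psiC (p q : Fin 7) :
    ∑ i, ∑ j, ∑ k, psiC p i j k * psiC q i j k = 24 * kd7 p q := by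
  have hdiag (i : Fin 7) : psiC p i q i = 0 := by linarith [psiC_swap_24 p i q i]
  simp only [sum_psiC_mul_psiC, hdiag, Finset.sum_sub_distrib, sum_mul_kd7]
  simp only [kd7]
  split_ifs <;> norm_num

lemma sum3_phiC_mul_psiC (q : Fin 7) :
    ∑ i, ∑ j, ∑ k, phiC i j k * psiC q i j k = 0 := by
  have hdiag (i : Fin 7) : phiC i q i = 0 := by rw [phiC_swap_23, phiC_self, neg_zero]
  simp [sum_phiC_mul_psiC, hdiag]

lemma sum_comm_three {α β γ M : Type*} [Fintype α] [Fintype β] [Fintype γ] [AddCommMonoid M]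
    (f : α → β → γ → M) : ∑ a, ∑ b, ∑ c, f a b c = ∑ c, ∑ a, ∑ b, f a b c :=
  (Finset.sum_congr rfl fun _ _ => Finset.sum_comm).trans Finset.sum_comm

/-- `(h ⋄ ψ)_{ijkl}`, for `H i j = h_{ij}`. -/
def diamondPsi (H : Fin 7 → Fin 7 → ℝ) (i j k l : Fin 7) : ℝ :=
  ∑ p, (H i p * psiC p j k l + H j p * psiC i p k l + H k p * psiC i j p l + H l p * psiC i j k p)

/-- `(X ∧ φ)_{ijkl}`. -/
def wedgePhi (x : Fin 7 → ℝ) (i j k l : Fin 7) : ℝ :=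
  x i * phiC j k l - x j * phiC i k l + x k * phiC i j l - x l * phiC i j k

def contractPsi (T : Fin 7 → Fin 7 → Fin 7 → Fin 7 → ℝ) (p q : Fin 7) : ℝ :=
  ∑ i, ∑ j, ∑ k, T p i j k * psiC q i j k

lemma contract_diamond_term1 (H : Fin 7 → Fin 7 → ℝ) (p q : Fin 7) :
    ∑ i, ∑ j, ∑ k, (∑ m, H p m * psiC m i j k) * psiC q i j k = 24 * H p q := by
  calc ∑ i, ∑ j, ∑ k, (∑ m, H p m * psiC m i j k) * psiC q i j k
      = ∑ m, H p m * ∑ i, ∑ j, ∑ k, psiC m i j k * psiC q i j k := by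
        simp only [Finset.sum_mul, Finset.mul_sum, mul_assoc]
        exact (Finset.sum_congr rfl fun i _ => sum_comm_three _).trans Finset.sum_comm
    _ = 24 * H p q := by
        simp only [sum3_psiC_mul_psiC, mul_left_comm _ (24 : ℝ), ← Finset.mul_sum, sum_mul_kd7]

section Symmetric

variable {H : Fin 7 → Fin 7 → ℝ} (hH : ∀ i j, H i j = H j i)
include hH

lemma sum_sym_mul_psiC (p q : Fin 7) : ∑ i, ∑ m, H i m * psiC p m q i = 0 := by
  have h : ∑ i, ∑ m, H i m * psiC p m q i = -∑ m, ∑ i, H m i * psiC p i q m := by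
    simp only [← Finset.sum_neg_distrib]
    rw [Finset.sum_comm]
    refine Finset.sum_congr rfl fun m _ => Finset.sum_congr rfl fun i _ => ?_
    rw [hH, psiC_swap_24]
    ring
  linarith

lemma contract_diamond_term2 (p q : Fin 7) :
    ∑ i, ∑ j, ∑ k, (∑ m, H i m * psiC p m j k) * psiC q i j k
      = 4 * kd7 p q * ∑ m, H m m - 4 * H p q := by
  calc ∑ i, ∑ j, ∑ k, (∑ m, H i m * psiC p m j k) * psiC q i j k
      = ∑ i, ∑ m, H i m * ∑ j, ∑ k, psiC p m j k * psiC q i j k := by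
        refine Finset.sum_congr rfl fun i _ => ?_
        simp only [Finset.sum_mul, Finset.mul_sum, mul_assoc]
        exact sum_comm_three _
    _ = ∑ i, ∑ m, (4 * (kd7 p q * (H i m * kd7 m i)) - 4 * (kd7 p i * (H i m * kd7 m q))
          - 2 * (H i m * psiC p m q i)) := by
        simp only [sum_psiC_mul_psiC]
        refine Finset.sum_congr rfl fun i _ => Finset.sum_congr rfl fun m _ => ?_
        ring
    _ = 4 * kd7 p q * ∑ m, H m m - 4 * H p q := by
        simp only [Finset.sum_sub_distrib, ← Finset.mul_sum, sum_mul_kd7, sum_kd7_mul,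
          sum_sym_mul_psiC hH]
        ring

lemma contract_diamond_term3 (p q : Fin 7) :
    ∑ i, ∑ j, ∑ k, (∑ m, H j m * psiC p i m k) * psiC q i j k
      = 4 * kd7 p q * ∑ m, H m m - 4 * H p q := by
  rw [← contract_diamond_term2 hH, Finset.sum_comm]
  refine Finset.sum_congr rfl fun a _ => Finset.sum_congr rfl fun b _ =>
    Finset.sum_congr rfl fun c _ => ?_
  simp only [psiC_swap_23 p b, psiC_swap_23 q b, mul_neg, Finset.sum_neg_distrib, neg_mul, neg_neg]

lemma contract_diamond_term4 (p q : Fin 7) :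
    ∑ i, ∑ j, ∑ k, (∑ m, H k m * psiC p i j m) * psiC q i j k
      = 4 * kd7 p q * ∑ m, H m m - 4 * H p q := by
  rw [← contract_diamond_term2 hH, sum_comm_three]
  refine Finset.sum_congr rfl fun a _ => ?_
  rw [Finset.sum_comm]
  refine Finset.sum_congr rfl fun b _ => Finset.sum_congr rfl fun c _ => ?_
  simp only [psiC_swap_24 p c, psiC_swap_24 q c, mul_neg, Finset.sum_neg_distrib, neg_mul, neg_neg]

lemma contractPsi_diamondPsi (p q : Fin 7) :
    contractPsi (diamondPsi H) p q = 12 * H p q + 12 * kd7 p q * ∑ m, H m m := by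
  simp only [contractPsi, diamondPsi, Finset.sum_add_distrib, add_mul]
  rw [contract_diamond_term1, contract_diamond_term2 hH, contract_diamond_term3 hH,
    contract_diamond_term4 hH]
  ring

end Symmetric

lemma contract_wedge_term (x : Fin 7 → ℝ) (p q : Fin 7) :
    ∑ i, ∑ j, ∑ k, x i * phiC p j k * psiC q i j k = -4 * ∑ a, x a * phiC p q a := by
  calc ∑ i, ∑ j, ∑ k, x i * phiC p j k * psiC q i j k
      = ∑ i, x i * ∑ j, ∑ k, phiC p j k * psiC q i j k := by
        simp only [Finset.mul_sum, mul_assoc]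
    _ = -4 * ∑ a, x a * phiC p q a := by
        simp only [sum_phiC_mul_psiC, Finset.mul_sum]
        exact Finset.sum_congr rfl fun _ _ => by ring

lemma contractPsi_wedgePhi (x : Fin 7 → ℝ) (p q : Fin 7) :
    contractPsi (wedgePhi x) p q = 12 * ∑ a, x a * phiC p q a := by
  have h1 : ∑ i, ∑ j, ∑ k, x p * phiC i j k * psiC q i j k = 0 := by
    simp only [mul_assoc, ← Finset.mul_sum, sum3_phiC_mul_psiC, mul_zero]
  have h3 : ∑ i, ∑ j, ∑ k, x j * phiC p i k * psiC q i j k = 4 * ∑ a, x a * phiC p q a := by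
    rw [Finset.sum_comm, ← neg_neg (4 * _), ← neg_mul, ← contract_wedge_term]
    simp only [← Finset.sum_neg_distrib]
    refine Finset.sum_congr rfl fun a _ => Finset.sum_congr rfl fun b _ =>
      Finset.sum_congr rfl fun c _ => ?_
    rw [psiC_swap_23 q b]
    ring
  have h4 :
      ∑ i, ∑ j, ∑ k, x k * phiC p i j * psiC q i j k = -4 * ∑ a, x a * phiC p q a := by
    rw [← contract_wedge_term, sum_comm_three]
    refine Finset.sum_congr rfl fun a _ => Finset.sum_congr rfl fun b _ =>
      Finset.sum_congr rfl fun c _ => ?_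
    rw [psiC_swap_23 q b c a, psiC_swap_24 q c b a, neg_neg]
  simp only [contractPsi, wedgePhi, add_mul, sub_mul, Finset.sum_add_distrib,
    Finset.sum_sub_distrib, h1, contract_wedge_term, h3, h4]
  ring

section Recovery

variable {ρ : AlternatingMap ℝ E7 ℝ (Fin 4)} {H : Fin 7 → Fin 7 → ℝ} {x : Fin 7 → ℝ}
  (hH : ∀ i j, H i j = H j i)
  (hρ : ∀ i j k l, 2 * ρ ![e7 i, e7 j, e7 k, e7 l] = diamondPsi H i j k l + wedgePhi x i j k l)
include hH hρ

lemma rhoHat_eq (p q : Fin 7) :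
    rhoHat ρ p q = 6 * H p q + 6 * kd7 p q * ∑ m, H m m + 6 * ∑ a, x a * phiC p q a := by
  have h2 : 2 * rhoHat ρ p q = contractPsi (diamondPsi H) p q + contractPsi (wedgePhi x) p q := by
    simp only [rhoHat, contractPsi, Finset.mul_sum, ← Finset.sum_add_distrib, ← add_mul,
      ← hρ, mul_assoc]
  rw [contractPsi_diamondPsi hH, contractPsi_wedgePhi] at h2
  linarith

lemma rhoHat_add_rhoHat_swap (p q : Fin 7) :
    rhoHat ρ p q + rhoHat ρ q p = 12 * H p q + 12 * kd7 p q * ∑ m, H m m := by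
  have hx : ∑ a, x a * phiC q p a = -∑ a, x a * phiC p q a := by
    simp only [phiC_swap_12 q p, mul_neg, Finset.sum_neg_distrib]
  have hkd : kd7 q p = kd7 p q := by simp only [kd7, eq_comm]
  rw [rhoHat_eq hH hρ, rhoHat_eq hH hρ, hx, hkd, hH q p]
  ring

lemma sum_rhoHat_diag : ∑ m, rhoHat ρ m m = 48 * ∑ m, H m m := by
  have htr : ∑ m : Fin 7, kd7 m m = 7 := by simp [kd7]
  simp only [rhoHat_eq hH hρ, phiC_self, mul_zero, Finset.sum_const_zero, add_zero,
    Finset.sum_add_distrib, ← Finset.mul_sum, ← Finset.sum_mul, htr]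
  ring

end Recovery

end G2

/-- Lemma 2.17: recovering the symmetric tensor `h` from the 4-form
`2ρ = h ⋄ ψ + X ∧ φ` via the contraction `ρ̂`. -/
theorem lemma_2_17 (ρ : AlternatingMap ℝ E7 ℝ (Fin 4))
    (h : E7 →ₗ[ℝ] E7 →ₗ[ℝ] ℝ) (hsymm : ∀ x y : E7, h x y = h y x) (X : E7)
    (heq : ∀ i j k l : Fin 7,
      2 * ρ ![e7 i, e7 j, e7 k, e7 l] =
        (∑ p, (h (e7 i) (e7 p) * psiC p j k l + h (e7 j) (e7 p) * psiC i p k l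
               + h (e7 k) (e7 p) * psiC i j p l + h (e7 l) (e7 p) * psiC i j k p))
        + X i * phiC j k l - X j * phiC i k l + X k * phiC i j l - X l * phiC i j k) :
    ∀ i l : Fin 7,
      h (e7 i) (e7 l) =
        (1/12 : ℝ) * (rhoHat ρ i l + rhoHat ρ l i)
          - (1/48 : ℝ) * (∑ m, rhoHat ρ m m) * kd7 i l := by
  have hH : ∀ i j, h (e7 i) (e7 j) = h (e7 j) (e7 i) := fun i j => hsymm _ _
  have hρ (i j k l : Fin 7) : 2 * ρ ![e7 i, e7 j, e7 k, e7 l]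
      = G2.diamondPsi (fun i j => h (e7 i) (e7 j)) i j k l + G2.wedgePhi (X ·) i j k l := by
    rw [heq, G2.diamondPsi, G2.wedgePhi]
    ring
  intro i l
  rw [G2.rhoHat_add_rhoHat_swap hH hρ, G2.sum_rhoHat_diag hH hρ]
  ring
end
end

section
/- (Pointwise form of Proposition 2.11) Let S be a 4-dimensional linear subspace of ℝ⁷. Then φ vanishes identically on S (i.e. φ(x,y,z) = 0 for all x,y,z ∈ S) if and only if χ(x,y,z) ∈ S for all x,y,z ∈ S. -/
open scoped RealInnerProductSpace

noncomputable section

/-!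
Both directions rest on `χ(x,y,z) = x × (y × z) + ⟨x,y⟩z − ⟨x,z⟩y`, which follows from the component
identity `ψ_abcd = Σₘ φ_bcm φ_amd + δ_ab δ_cd − δ_ac δ_bd`; in particular
`x × (x × u) = ⟨x,u⟩x − |x|²u`.

If `φ` vanishes on `S`, then `S × S ⊆ Sᗮ`, and for `0 ≠ x ∈ S` the map `s ↦ x × s` from `S` to the
3-dimensional `Sᗮ` has kernel `ℝx`, hence is onto; so `x × (y × z) = x × (x × s) ∈ S`.

Conversely, by multilinearity it suffices to show `φ(a,b,c) = 0` for three distinct vectors of an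
orthonormal basis `a, b, c, d` of `S`. Then `v = χ(d,b,c) = d × (b × c)` lies in `S` and is
orthogonal to `b, c, d`, so `v = t a`; and `d × v = ⟨d, b × c⟩ d − b × c` gives
`φ(a,b,c) = ⟨b × c, a⟩ = −t φ(d,a,a) = 0`.
-/

-- Integer mirrors of `kd7`, `trip7`, `quad7`, `phiC`, `psiC` with the determinants expanded, on which
-- identities between components are decidable.
def kdZ (i j : Fin 7) : ℤ := if i = j then 1 else 0

def det3Z (a b c d e f g h i : ℤ) : ℤ := a*e*i - a*f*h - b*d*i + b*f*g + c*d*h - c*e*g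

def tripZ (a b c i j k : Fin 7) : ℤ :=
  det3Z (kdZ a i) (kdZ a j) (kdZ a k) (kdZ b i) (kdZ b j) (kdZ b k) (kdZ c i) (kdZ c j) (kdZ c k)

def quadZ (a b c d i j k l : Fin 7) : ℤ :=
  kdZ a i * tripZ b c d j k l - kdZ a j * tripZ b c d i k l
  + kdZ a k * tripZ b c d i j l - kdZ a l * tripZ b c d i j k

def phiZ (i j k : Fin 7) : ℤ :=
  tripZ 0 1 2 i j k + tripZ 0 3 4 i j k - tripZ 0 5 6 i j k
  + tripZ 1 3 5 i j k - tripZ 1 6 4 i j k + tripZ 2 3 6 i j k - tripZ 2 4 5 i j k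

def psiZ (i j k l : Fin 7) : ℤ :=
  quadZ 3 4 5 6 i j k l - quadZ 1 2 3 4 i j k l + quadZ 1 2 5 6 i j k l
  - quadZ 2 0 3 5 i j k l + quadZ 2 0 6 4 i j k l
  - quadZ 0 1 3 6 i j k l + quadZ 0 1 4 5 i j k l

lemma phiZ_swap12 : ∀ i j k : Fin 7, phiZ j i k = -phiZ i j k := by decide +kernel

lemma phiZ_swap23 : ∀ i j k : Fin 7, phiZ i k j = -phiZ i j k := by decide +kernel

lemma psiZ_swap12 : ∀ i j k l : Fin 7, psiZ j i k l = -psiZ i j k l := by decide +kernel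

lemma psiZ_eq_sum_phiZ_mul_phiZ : ∀ a b c d : Fin 7, psiZ a b c d =
    ∑ m, phiZ b c m * phiZ a m d + kdZ a b * kdZ c d - kdZ a c * kdZ b d := by decide +kernel

lemma kd7_eq_cast (i j : Fin 7) : kd7 i j = kdZ i j := by
  unfold kd7 kdZ; split_ifs <;> simp

lemma trip7_eq_cast (a b c i j k : Fin 7) : trip7 a b c i j k = tripZ a b c i j k := by
  simp [trip7, tripZ, det3Z, Matrix.det_fin_three, kd7_eq_cast]

lemma quad7_eq_cast (a b c d i j k l : Fin 7) : quad7 a b c d i j k l = quadZ a b c d i j k l := by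
  rw [quad7, Matrix.det_succ_row_zero, Fin.sum_univ_four]
  simp [Matrix.det_fin_three, Fin.succAbove, quadZ, tripZ, det3Z, kd7_eq_cast]
  ring

lemma phiC_eq_cast (i j k : Fin 7) : phiC i j k = phiZ i j k := by
  simp only [phiC, phiZ, trip7_eq_cast]; push_cast; ring

lemma psiC_eq_cast (i j k l : Fin 7) : psiC i j k l = psiZ i j k l := by
  simp only [psiC, psiZ, quad7_eq_cast]; push_cast; ring

lemma phiC_swap12 (i j k : Fin 7) : phiC j i k = -phiC i j k := by
  simp only [phiC_eq_cast, phiZ_swap12 i j k, Int.cast_neg]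

lemma phiC_swap23 (i j k : Fin 7) : phiC i k j = -phiC i j k := by
  simp only [phiC_eq_cast, phiZ_swap23 i j k, Int.cast_neg]

lemma psiC_swap12 (i j k l : Fin 7) : psiC j i k l = -psiC i j k l := by
  simp only [psiC_eq_cast, psiZ_swap12 i j k l, Int.cast_neg]

lemma psiC_eq_sum_phiC_mul_phiC (a b c d : Fin 7) : psiC a b c d =
    ∑ m, phiC b c m * phiC a m d + kd7 a b * kd7 c d - kd7 a c * kd7 b d := by
  simp only [psiC_eq_cast, phiC_eq_cast, kd7_eq_cast]
  exact_mod_cast psiZ_eq_sum_phiZ_mul_phiZ a b c d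

lemma inner_eq_sum (x y : E7) : ⟪x, y⟫ = ∑ i, x i * y i := by
  simp [PiLp.inner_apply, mul_comm]

lemma inner_e7 (x : E7) (i : Fin 7) : ⟪x, e7 i⟫ = x i := by
  simp [e7, EuclideanSpace.inner_single_right]

lemma cross7_apply (x y : E7) (k : Fin 7) : cross7 x y k = ∑ i, ∑ j, x i * y j * phiC i j k := by
  simp [cross7, phi7, e7]

lemma chi7_apply (x y z : E7) (l : Fin 7) : chi7 x y z l = psi7 x y z (e7 l) := rfl

lemma phi7_swap12 (x y z : E7) : phi7 y x z = -phi7 x y z := by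
  simp only [phi7, ← Finset.sum_neg_distrib]
  rw [Finset.sum_comm]
  refine Finset.sum_congr rfl fun i _ => Finset.sum_congr rfl fun j _ =>
    Finset.sum_congr rfl fun k _ => ?_
  rw [phiC_swap12]; ring

lemma phi7_swap23 (x y z : E7) : phi7 x z y = -phi7 x y z := by
  simp only [phi7, ← Finset.sum_neg_distrib]
  refine Finset.sum_congr rfl fun i _ => ?_
  rw [Finset.sum_comm]
  refine Finset.sum_congr rfl fun j _ => Finset.sum_congr rfl fun k _ => ?_
  rw [phiC_swap23]; ring

lemma phi7_swap13 (x y z : E7) : phi7 z y x = -phi7 x y z := by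
  rw [phi7_swap12, phi7_swap23, phi7_swap12, neg_neg]

lemma phi7_cyclic (x y z : E7) : phi7 x y z = phi7 y z x := by
  rw [phi7_swap12 y x z, phi7_swap23 y x z]

lemma phi7_self12 (x z : E7) : phi7 x x z = 0 := by
  linarith [phi7_swap12 x x z]

lemma phi7_self23 (x y : E7) : phi7 x y y = 0 := by
  linarith [phi7_swap23 x y y]

lemma phi7_self13 (x y : E7) : phi7 x y x = 0 := by
  linarith [phi7_swap13 x y x]

lemma psi7_self12 (x z w : E7) : psi7 x x z w = 0 := by
  have h : psi7 x x z w = -psi7 x x z w := by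
    simp only [psi7, ← Finset.sum_neg_distrib]
    rw [Finset.sum_comm]
    refine Finset.sum_congr rfl fun i _ => Finset.sum_congr rfl fun j _ =>
      Finset.sum_congr rfl fun k _ => Finset.sum_congr rfl fun l _ => ?_
    rw [psiC_swap12]; ring
  linarith

lemma inner_cross7 (x y z : E7) : ⟪cross7 x y, z⟫ = phi7 x y z := by
  simp only [inner_eq_sum, cross7_apply, phi7, Finset.sum_mul]
  rw [Finset.sum_comm]
  refine Finset.sum_congr rfl fun i _ => ?_
  rw [Finset.sum_comm]
  refine Finset.sum_congr rfl fun j _ => Finset.sum_congr rfl fun k _ => by ring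

lemma cross7_swap (x y : E7) : cross7 y x = -cross7 x y := by
  ext k
  simp only [PiLp.neg_apply]
  exact phi7_swap12 x y (e7 k)

lemma cross7_add_left (x x' y : E7) : cross7 (x + x') y = cross7 x y + cross7 x' y := by
  ext k
  simp only [cross7_apply, PiLp.add_apply, add_mul, Finset.sum_add_distrib]

lemma cross7_add_right (x y y' : E7) : cross7 x (y + y') = cross7 x y + cross7 x y' := by
  ext k
  simp only [cross7_apply, PiLp.add_apply, mul_add, add_mul, Finset.sum_add_distrib]

lemma cross7_smul_left (c : ℝ) (x y : E7) : cross7 (c • x) y = c • cross7 x y := by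
  ext k
  simp only [cross7_apply, PiLp.smul_apply, smul_eq_mul, Finset.mul_sum, mul_assoc]

lemma cross7_smul_right (c : ℝ) (x y : E7) : cross7 x (c • y) = c • cross7 x y := by
  ext k
  simp only [cross7_apply, PiLp.smul_apply, smul_eq_mul, Finset.mul_sum]
  refine Finset.sum_congr rfl fun i _ => Finset.sum_congr rfl fun j _ => by ring

def crossLin : E7 →ₗ[ℝ] E7 →ₗ[ℝ] E7 :=
  LinearMap.mk₂ ℝ cross7 cross7_add_left cross7_smul_left cross7_add_right cross7_smul_right

def phiLin : E7 →ₗ[ℝ] E7 →ₗ[ℝ] E7 →ₗ[ℝ] ℝ := crossLin.compr₂ (innerₗ E7)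

lemma phiLin_apply (x y z : E7) : phiLin x y z = phi7 x y z := inner_cross7 x y z

lemma cross7_zero_left (y : E7) : cross7 0 y = 0 := crossLin.map_zero₂ y

lemma cross7_zero_right (x : E7) : cross7 x 0 = 0 := (crossLin x).map_zero

lemma cross7_neg_right (x y : E7) : cross7 x (-y) = -cross7 x y := (crossLin x).map_neg y

lemma phi7_cross7_eq_sum (x y z w : E7) : phi7 x (cross7 y z) w =
    ∑ a, ∑ b, ∑ c, ∑ d, x a * y b * z c * w d * ∑ m, phiC b c m * phiC a m d := by
  simp only [phi7, cross7_apply, Finset.mul_sum, Finset.sum_mul]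
  refine Finset.sum_congr rfl fun a _ => ?_
  conv_lhs => rw [← Finset.sum_comm_cycle]; enter [2, d, 2, b]; rw [Finset.sum_comm]
  rw [← Finset.sum_comm_cycle]
  refine Finset.sum_congr rfl fun b _ => Finset.sum_congr rfl fun c _ =>
    Finset.sum_congr rfl fun d _ => Finset.sum_congr rfl fun m _ => by ring

lemma inner_mul_inner_eq_sum_kd7 (x y z w : E7) : ⟪x, y⟫ * ⟪z, w⟫ =
    ∑ a, ∑ b, ∑ c, ∑ d, x a * y b * z c * w d * (kd7 a b * kd7 c d) := by
  simp [inner_eq_sum, kd7, Finset.sum_mul_sum, mul_assoc]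

lemma inner_mul_inner_eq_sum_kd7' (x y z w : E7) : ⟪x, z⟫ * ⟪y, w⟫ =
    ∑ a, ∑ b, ∑ c, ∑ d, x a * y b * z c * w d * (kd7 a c * kd7 b d) := by
  simp only [inner_eq_sum, Finset.sum_mul_sum, mul_assoc, kd7, mul_ite, mul_one, mul_zero,
    Finset.sum_ite_eq, Finset.mem_univ, ↓reduceIte]
  exact Finset.sum_congr rfl fun a _ => Finset.sum_congr rfl fun b _ => by ring

lemma psi7_eq_phi7_cross7 (x y z w : E7) :
    psi7 x y z w = phi7 x (cross7 y z) w + ⟪x, y⟫ * ⟪z, w⟫ - ⟪x, z⟫ * ⟪y, w⟫ := by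
  rw [phi7_cross7_eq_sum, inner_mul_inner_eq_sum_kd7, inner_mul_inner_eq_sum_kd7' x y z w]
  simp only [psi7, psiC_eq_sum_phiC_mul_phiC, ← Finset.sum_add_distrib, ← Finset.sum_sub_distrib]
  refine Finset.sum_congr rfl fun a _ => Finset.sum_congr rfl fun b _ =>
    Finset.sum_congr rfl fun c _ => Finset.sum_congr rfl fun d _ => by ring

lemma chi7_eq_cross7_cross7 (x y z : E7) :
    chi7 x y z = cross7 x (cross7 y z) + ⟪x, y⟫ • z - ⟪x, z⟫ • y := by
  ext l
  simp only [chi7_apply, psi7_eq_phi7_cross7, inner_e7, PiLp.sub_apply, PiLp.add_apply,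
    PiLp.smul_apply, smul_eq_mul]
  rfl

lemma cross7_cross7_self (x u : E7) : cross7 x (cross7 x u) = ⟪x, u⟫ • x - ⟪x, x⟫ • u := by
  have h := chi7_eq_cross7_cross7 x x u
  have h0 : chi7 x x u = 0 := by ext l; exact psi7_self12 x u (e7 l)
  rw [h0] at h
  linear_combination (norm := module) -h

lemma inner_cross7_cross7 (b c d : E7) :
    ⟪b, cross7 d (cross7 b c)⟫ = ⟪b, b⟫ * ⟪c, d⟫ - ⟪b, c⟫ * ⟪b, d⟫ := by
  rw [real_inner_comm, inner_cross7, phi7_swap13, ← inner_cross7, cross7_cross7_self,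
    inner_sub_left, inner_smul_left, inner_smul_left]
  simp only [conj_trivial]; ring

lemma cross7_mem_orthogonal {S : Submodule ℝ E7}
    (hφ : ∀ x ∈ S, ∀ y ∈ S, ∀ z ∈ S, phi7 x y z = 0) {x y : E7} (hx : x ∈ S) (hy : y ∈ S) :
    cross7 x y ∈ Sᗮ :=
  (Submodule.mem_orthogonal' S _).mpr fun z hz => (inner_cross7 x y z).trans (hφ x hx y hy z hz)

lemma mem_span_singleton_of_cross7_eq_zero {x s : E7} (hx : x ≠ 0) (h : cross7 x s = 0) :
    s ∈ ℝ ∙ x := by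
  have hxx : ⟪x, x⟫ ≠ 0 := inner_self_ne_zero.mpr hx
  have hs : ⟪x, x⟫ • s = ⟪x, s⟫ • x := by
    have := cross7_cross7_self x s
    rw [h, cross7_zero_right] at this
    exact (sub_eq_zero.mp this.symm).symm
  refine Submodule.mem_span_singleton.mpr ⟨⟪x, s⟫ / ⟪x, x⟫, ?_⟩
  rw [div_eq_inv_mul, mul_smul, ← hs, smul_smul, inv_mul_cancel₀ hxx, one_smul]

lemma finrank_orthogonal_eq_three {S : Submodule ℝ E7} (hS : Module.finrank ℝ S = 4) :
    Module.finrank ℝ Sᗮ = 3 := by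
  have := S.finrank_add_finrank_orthogonal
  rw [hS, finrank_euclideanSpace_fin] at this
  omega

lemma exists_cross7_eq_of_mem_orthogonal {S : Submodule ℝ E7} (hS : Module.finrank ℝ S = 4)
    (hφ : ∀ x ∈ S, ∀ y ∈ S, ∀ z ∈ S, phi7 x y z = 0) {x u : E7} (hx : x ∈ S) (hx0 : x ≠ 0)
    (hu : u ∈ Sᗮ) : ∃ s ∈ S, cross7 x s = u := by
  let L : S →ₗ[ℝ] Sᗮ := (crossLin x).restrict fun s hs => cross7_mem_orthogonal hφ hx hs
  have hker : LinearMap.ker L ≤ ℝ ∙ (⟨x, hx⟩ : S) := by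
    intro s hs
    obtain ⟨c, hc⟩ := Submodule.mem_span_singleton.mp
      (mem_span_singleton_of_cross7_eq_zero hx0 (congrArg Subtype.val hs))
    exact Submodule.mem_span_singleton.mpr ⟨c, Subtype.ext hc⟩
  have hker_rank : Module.finrank ℝ (LinearMap.ker L) ≤ 1 := by
    have hxS : (⟨x, hx⟩ : S) ≠ 0 := fun h => hx0 (congrArg Subtype.val h)
    simpa [finrank_span_singleton hxS] using Submodule.finrank_mono hker
  have hrange : LinearMap.range L = ⊤ := by
    apply Submodule.eq_top_of_finrank_eq
    have hsum := L.finrank_range_add_finrank_ker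
    have hle := (LinearMap.range L).finrank_le
    rw [hS] at hsum
    rw [finrank_orthogonal_eq_three hS] at hle ⊢
    omega
  obtain ⟨s, hs⟩ := LinearMap.range_eq_top.mp hrange ⟨u, hu⟩
  exact ⟨s, s.2, congrArg Subtype.val hs⟩

lemma cross7_mem_of_mem_orthogonal {S : Submodule ℝ E7} (hS : Module.finrank ℝ S = 4)
    (hφ : ∀ x ∈ S, ∀ y ∈ S, ∀ z ∈ S, phi7 x y z = 0) {x u : E7} (hx : x ∈ S) (hu : u ∈ Sᗮ) :
    cross7 x u ∈ S := by
  rcases eq_or_ne x 0 with rfl | hx0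
  · rw [cross7_zero_left]; exact S.zero_mem
  obtain ⟨s, hs, rfl⟩ := exists_cross7_eq_of_mem_orthogonal hS hφ hx hx0 hu
  rw [cross7_cross7_self]
  exact S.sub_mem (S.smul_mem _ hx) (S.smul_mem _ hs)

lemma chi7_mem_of_phi7_eq_zero {S : Submodule ℝ E7} (hS : Module.finrank ℝ S = 4)
    (hφ : ∀ x ∈ S, ∀ y ∈ S, ∀ z ∈ S, phi7 x y z = 0) :
    ∀ x ∈ S, ∀ y ∈ S, ∀ z ∈ S, chi7 x y z ∈ S := by
  intro x hx y hy z hz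
  rw [chi7_eq_cross7_cross7]
  exact S.sub_mem (S.add_mem (cross7_mem_of_mem_orthogonal hS hφ hx
    (cross7_mem_orthogonal hφ hy hz)) (S.smul_mem _ hz)) (S.smul_mem _ hy)

lemma LinearMap.apply_apply_apply_eq_zero_of_basis {R M ι : Type*} [CommRing R]
    [AddCommGroup M] [Module R M] (f : M →ₗ[R] M →ₗ[R] M →ₗ[R] R) {S : Submodule R M}
    (b : Module.Basis ι R S) (h : ∀ i j k, f (b i) (b j) (b k) = 0) :
    ∀ x ∈ S, ∀ y ∈ S, ∀ z ∈ S, f x y z = 0 := by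
  let g : S →ₗ[R] S →ₗ[R] S →ₗ[R] R :=
    (f.compl₁₂ S.subtype S.subtype).compr₂ (LinearMap.lcomp R R S.subtype)
  have hg : g = 0 := b.ext fun i => b.ext fun j => b.ext fun k => h i j k
  intro x hx y hy z hz
  exact LinearMap.congr_fun (LinearMap.congr_fun (LinearMap.congr_fun hg ⟨x, hx⟩) ⟨y, hy⟩) ⟨z, hz⟩

lemma OrthonormalBasis.eq_inner_smul_of_inner_eq_zero {E ι : Type*} [NormedAddCommGroup E]
    [InnerProductSpace ℝ E] [Fintype ι] {S : Submodule ℝ E} (b : OrthonormalBasis ι ℝ S)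
    {w : E} (hw : w ∈ S) (i : ι) (h : ∀ t, t ≠ i → ⟪(b t : E), w⟫ = 0) :
    w = ⟪(b i : E), w⟫ • (b i : E) := by
  have hrepr := congrArg Subtype.val (b.sum_repr' ⟨w, hw⟩)
  rw [Finset.sum_eq_single i (fun t _ ht => by rw [Submodule.coe_inner]; simp [h t ht])
    (by simp)] at hrepr
  simpa using hrepr.symm

lemma fin4_exists_fourth : ∀ i j k : Fin 4, i ≠ j → i ≠ k → j ≠ k →
    ∃ m, m ≠ i ∧ m ≠ j ∧ m ≠ k ∧ ∀ t, t ≠ i → t = j ∨ t = k ∨ t = m := by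
  decide

lemma phi7_eq_zero_of_cross7_cross7_eq_smul {a b c d : E7} {t : ℝ} (hd : ⟪d, d⟫ = 1)
    (hda : ⟪d, a⟫ = 0) (h : cross7 d (cross7 b c) = t • a) : phi7 a b c = 0 := by
  have hbc : cross7 b c = ⟪d, cross7 b c⟫ • d - t • cross7 d a := by
    have := cross7_cross7_self d (cross7 b c)
    rw [h, cross7_smul_right, hd, one_smul] at this
    rw [this]; abel
  rw [phi7_cyclic, ← inner_cross7, hbc, inner_sub_left, inner_smul_left, inner_smul_left, hda,
    inner_cross7, phi7_self23]
  simp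

lemma phi7_orthonormalBasis_eq_zero {S : Submodule ℝ E7}
    (hχ : ∀ x ∈ S, ∀ y ∈ S, ∀ z ∈ S, chi7 x y z ∈ S) (b : OrthonormalBasis (Fin 4) ℝ S)
    (i j k : Fin 4) : phi7 (b i) (b j) (b k) = 0 := by
  have hb : ∀ p q, ⟪(b p : E7), b q⟫ = if p = q then 1 else 0 := fun p q => by
    rw [← Submodule.coe_inner]; exact orthonormal_iff_ite.mp b.orthonormal p q
  rcases eq_or_ne i j with rfl | hij
  · exact phi7_self12 _ _
  rcases eq_or_ne i k with rfl | hik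
  · exact phi7_self13 _ _
  rcases eq_or_ne j k with rfl | hjk
  · exact phi7_self23 _ _
  obtain ⟨m, hmi, hmj, hmk, hcover⟩ := fin4_exists_fourth i j k hij hik hjk
  have hv : chi7 (b m) (b j) (b k) = cross7 (b m) (cross7 (b j) (b k)) := by
    simp [chi7_eq_cross7_cross7, hb, hmj, hmk]
  have hvS : cross7 (b m) (cross7 (b j) (b k)) ∈ S := hv ▸ hχ _ (b m).2 _ (b j).2 _ (b k).2
  have hvj : ⟪(b j : E7), cross7 (b m) (cross7 (b j) (b k))⟫ = 0 := by
    simp [inner_cross7_cross7, hb, hjk, Ne.symm hmj, Ne.symm hmk]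
  have hvk : ⟪(b k : E7), cross7 (b m) (cross7 (b j) (b k))⟫ = 0 := by
    rw [cross7_swap (b k : E7), cross7_neg_right, inner_neg_right, inner_cross7_cross7]
    simp [hb, Ne.symm hmj, Ne.symm hmk]
  have hvm : ⟪(b m : E7), cross7 (b m) (cross7 (b j) (b k))⟫ = 0 := by
    rw [real_inner_comm, inner_cross7, phi7_self13]
  refine phi7_eq_zero_of_cross7_cross7_eq_smul (by rw [hb, if_pos rfl]) (by rw [hb, if_neg hmi])
    (b.eq_inner_smul_of_inner_eq_zero hvS i fun t ht => ?_)
  rcases hcover t ht with rfl | rfl | rfl <;> assumption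

lemma phi7_eq_zero_of_chi7_mem {S : Submodule ℝ E7} (hS : Module.finrank ℝ S = 4)
    (hχ : ∀ x ∈ S, ∀ y ∈ S, ∀ z ∈ S, chi7 x y z ∈ S) :
    ∀ x ∈ S, ∀ y ∈ S, ∀ z ∈ S, phi7 x y z = 0 := by
  let b := (stdOrthonormalBasis ℝ S).reindex (finCongr hS)
  intro x hx y hy z hz
  rw [← phiLin_apply]
  exact phiLin.apply_apply_apply_eq_zero_of_basis b.toBasis
    (fun i j k => by simpa [phiLin_apply] using phi7_orthonormalBasis_eq_zero hχ b i j k)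
    x hx y hy z hz

/-- Pointwise form of Proposition 2.11: a 4-dimensional subspace `S ⊆ ℝ⁷` is coassociative
(`φ` vanishes on `S`) if and only if `S` is closed under `χ`. -/
theorem prop_2_11 (S : Submodule ℝ E7) (hS : Module.finrank ℝ S = 4) :
    (∀ x ∈ S, ∀ y ∈ S, ∀ z ∈ S, phi7 x y z = 0) ↔
    (∀ x ∈ S, ∀ y ∈ S, ∀ z ∈ S, chi7 x y z ∈ S) :=
  ⟨chi7_mem_of_phi7_eq_zero hS, phi7_eq_zero_of_chi7_mem hS⟩
end
end

section
/- (Key trace identity in the proof of Theorem 2.14) For any alternating 3-form η on ℝ⁷, define η̂_{pq} = Σ_{i,j=1}^7 η_{pij} φ_{qij} and h_{il} = (1/4)(η̂_{il} + η̂_{li}) − (1/18)(Σ_{m=1}^7 η̂_{mm}) δ_{il}. Then h₁₁ + h₂₂ + h₃₃ = 2 η₁₂₃. (Here span{e₁,e₂,e₃} is the standard associative 3-plane for φ.) -/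
open scoped RealInnerProductSpace

noncomputable section

/-- `η̂_{pq} = Σ_{i,j} η_{pij} φ_{qij}`. -/
def etaHat (η : AlternatingMap ℝ E7 ℝ (Fin 3)) (p q : Fin 7) : ℝ :=
  ∑ i, ∑ j, η ![e7 p, e7 i, e7 j] * phiC q i j

/-- The symmetric tensor `h` determined by `η` via Lemma 2.13. -/
def hEta (η : AlternatingMap ℝ E7 ℝ (Fin 3)) (i l : Fin 7) : ℝ :=
  (1/4 : ℝ) * (etaHat η i l + etaHat η l i)
    - (1/18 : ℝ) * (∑ m, etaHat η m m) * kd7 i l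

/-!
Contracting η with a decomposable form gives
`Σ_{i,j} η_{pij} e^{abc}(e_q, e_i, e_j) = 2 (δ_{aq} η_{pbc} − δ_{bq} η_{pac} + δ_{cq} η_{pab})`.
Summed over the seven terms of φ this yields `tr η̂ = 6 ⟨η, φ⟩`, and, for `p ∈ {1, 2, 3}`,
`η̂_{pp} = 2 (η_{123} + the two other terms of ⟨η, φ⟩ with an index p)`.
Every term of φ other than `e¹²³` has exactly one index in `{1, 2, 3}`, so
`η̂_{11} + η̂_{22} + η̂_{33} = 4 η_{123} + 2 ⟨η, φ⟩` and
`h_{11} + h_{22} + h_{33} = (2 η_{123} + ⟨η, φ⟩) − ⟨η, φ⟩ = 2 η_{123}`.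
-/

theorem sum_sum_mul_trip7 (f : Fin 7 → Fin 7 → ℝ) (a b c q : Fin 7) :
    ∑ i, ∑ j, f i j * trip7 a b c q i j
      = kd7 a q * (f b c - f c b) - kd7 b q * (f a c - f c a) + kd7 c q * (f a b - f b a) := by
  simp only [trip7, kd7, Matrix.det_fin_three, Matrix.of_apply, Matrix.cons_val',
    Matrix.cons_val_zero, Matrix.cons_val_fin_one, Matrix.cons_val_one, Matrix.cons_val, mul_ite,
    mul_one, mul_zero, ite_mul, one_mul, zero_mul, mul_sub, mul_add, Finset.sum_sub_distrib, Finset.sum_add_distrib,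
    Finset.sum_ite_eq, Finset.mem_univ, if_true, Finset.sum_ite_irrel, Finset.sum_const_zero]
  ring

section Alternating

variable {M : Type*} [AddCommGroup M] [Module ℝ M] (η : AlternatingMap ℝ M ℝ (Fin 3))

theorem AlternatingMap.map_vec3_swap₀₁ (x y z : M) : η ![y, x, z] = -η ![x, y, z] := by
  rw [← η.map_swap ![x, y, z] (i := 0) (j := 1) (by decide)]
  congr 1
  ext i; fin_cases i <;> rfl

theorem AlternatingMap.map_vec3_swap₁₂ (x y z : M) : η ![x, z, y] = -η ![x, y, z] := by
  rw [← η.map_swap ![x, y, z] (i := 1) (j := 2) (by decide)]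
  congr 1
  ext i; fin_cases i <;> rfl

theorem AlternatingMap.sum_sum_mul_trip7 (v : Fin 7 → M) (x : M) (a b c q : Fin 7) :
    ∑ i, ∑ j, η ![x, v i, v j] * trip7 a b c q i j
      = 2 * (kd7 a q * η ![x, v b, v c] - kd7 b q * η ![x, v a, v c]
          + kd7 c q * η ![x, v a, v b]) := by
  rw [_root_.sum_sum_mul_trip7, η.map_vec3_swap₁₂ x (v b) (v c), η.map_vec3_swap₁₂ x (v a) (v c),
    η.map_vec3_swap₁₂ x (v a) (v b)]
  ring

theorem AlternatingMap.sum_sum_sum_mul_trip7 (v : Fin 7 → M) (a b c : Fin 7) :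
    ∑ m, ∑ i, ∑ j, η ![v m, v i, v j] * trip7 a b c m i j = 6 * η ![v a, v b, v c] := by
  simp only [η.sum_sum_mul_trip7, kd7, ite_mul, one_mul, zero_mul, ← Finset.mul_sum,
    Finset.sum_add_distrib, Finset.sum_sub_distrib, Finset.sum_ite_eq, Finset.mem_univ, if_true]
  rw [η.map_vec3_swap₀₁ (v a) (v b), η.map_vec3_swap₀₁ (v a) (v c), η.map_vec3_swap₁₂ (v a) (v b)]
  ring

end Alternating

section EtaHat

variable (η : AlternatingMap ℝ E7 ℝ (Fin 3))

/-- `⟨η, φ⟩ = Σ_{i<j<k} η_{ijk} φ_{ijk}`. -/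
def phiPairing : ℝ :=
  η ![e7 0, e7 1, e7 2] + η ![e7 0, e7 3, e7 4] - η ![e7 0, e7 5, e7 6]
    + η ![e7 1, e7 3, e7 5] - η ![e7 1, e7 6, e7 4]
    + η ![e7 2, e7 3, e7 6] - η ![e7 2, e7 4, e7 5]

theorem sum_etaHat_diag : ∑ m, etaHat η m m = 6 * phiPairing η := by
  simp only [etaHat, phiC, mul_add, mul_sub, Finset.sum_add_distrib, Finset.sum_sub_distrib,
    η.sum_sum_sum_mul_trip7 e7, phiPairing]

theorem etaHat_zero_zero :
    etaHat η 0 0 = 2 * (η ![e7 0, e7 1, e7 2] + η ![e7 0, e7 3, e7 4] - η ![e7 0, e7 5, e7 6]) := by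
  simp only [etaHat, phiC, mul_add, mul_sub, Finset.sum_add_distrib, Finset.sum_sub_distrib,
    η.sum_sum_mul_trip7 e7]
  simp only [kd7, Fin.reduceEq, ↓reduceIte, one_mul, zero_mul]
  ring

theorem etaHat_one_one :
    etaHat η 1 1 = 2 * (η ![e7 0, e7 1, e7 2] + η ![e7 1, e7 3, e7 5] - η ![e7 1, e7 6, e7 4]) := by
  simp only [etaHat, phiC, mul_add, mul_sub, Finset.sum_add_distrib, Finset.sum_sub_distrib,
    η.sum_sum_mul_trip7 e7]
  simp only [kd7, Fin.reduceEq, ↓reduceIte, one_mul, zero_mul]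
  rw [η.map_vec3_swap₀₁]
  ring

theorem etaHat_two_two :
    etaHat η 2 2 = 2 * (η ![e7 0, e7 1, e7 2] + η ![e7 2, e7 3, e7 6] - η ![e7 2, e7 4, e7 5]) := by
  simp only [etaHat, phiC, mul_add, mul_sub, Finset.sum_add_distrib, Finset.sum_sub_distrib,
    η.sum_sum_mul_trip7 e7]
  simp only [kd7, Fin.reduceEq, ↓reduceIte, one_mul, zero_mul]
  rw [η.map_vec3_swap₀₁ (e7 0) (e7 2), η.map_vec3_swap₁₂ (e7 0) (e7 1)]
  ring

end EtaHat

/-- Key trace identity in the proof of Theorem 2.14: the tangential trace of `h`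
over the standard associative 3-plane `span{e₁,e₂,e₃}` equals `2 η₁₂₃`. -/
theorem trace_identity_assoc (η : AlternatingMap ℝ E7 ℝ (Fin 3)) :
    hEta η 0 0 + hEta η 1 1 + hEta η 2 2 = 2 * η ![e7 0, e7 1, e7 2] := by
  simp only [hEta, kd7, if_true, sum_etaHat_diag, etaHat_zero_zero, etaHat_one_one, etaHat_two_two,
    phiPairing]
  ring
end
end

section
/- (Key trace identity in the proof of Theorem 2.18) For any alternating 4-form ρ on ℝ⁷, define ρ̂_{pq} = Σ_{i,j,k=1}^7 ρ_{pijk} ψ_{qijk} and h_{il} = (1/12)(ρ̂_{il} + ρ̂_{li}) − (1/48)(Σ_{m=1}^7 ρ̂_{mm}) δ_{il}. Then h₄₄ + h₅₅ + h₆₆ + h₇₇ = 2 ρ₄₅₆₇. (Here span{e₄,e₅,e₆,e₇} is the standard coassociative 4-plane.) -/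
open scoped RealInnerProductSpace

noncomputable section

/-- The symmetric tensor `h` determined by `ρ` via Lemma 2.17. -/
def hRho (ρ : AlternatingMap ℝ E7 ℝ (Fin 4)) (i l : Fin 7) : ℝ :=
  (1/12 : ℝ) * (rhoHat ρ i l + rhoHat ρ l i)
    - (1/48 : ℝ) * (∑ m, rhoHat ρ m m) * kd7 i l

/-! Contracting an alternating 4-form `ρ` with a decomposable `e^{abcd}` gives
`Σ_{ijk} ρ_{pijk} e^{abcd}_{pijk} = 6 [p ∈ {a,b,c,d}] ρ_{abcd}`. Writing `ψ = Σ_S c_S e^S` over its seven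
index sets `S`, this yields `Σ_{p∈T} ρ̂_{pp} = 6 Σ_S c_S |S ∩ T| ρ_S` and `Σ_m ρ̂_{mm} = 24 Σ_S c_S ρ_S`, so for
`T = {4,5,6,7}` the trace of `h` over `T` is `Σ_S c_S (|S ∩ T| - 2) ρ_S`. The sets `S` are the complements of
the lines of the Fano plane encoded by `φ`; two distinct lines meet in one point, so every `S ≠ T` meets `T`
in exactly two indices and only `S = T` survives, with coefficient `2`. -/

open Finset

section Alternating

variable {R M N : Type*} [CommRing R] [AddCommGroup M] [Module R M] [AddCommGroup N] [Module R N]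

theorem AlternatingMap.map_fin4_swap01 (ρ : M [⋀^Fin 4]→ₗ[R] N) (a b c d : M) :
    ρ ![b, a, c, d] = -ρ ![a, b, c, d] := by
  rw [← ρ.map_swap ![a, b, c, d] (show (0 : Fin 4) ≠ 1 by decide)]
  congr 1; funext i; fin_cases i <;> rfl

theorem AlternatingMap.map_fin4_swap12 (ρ : M [⋀^Fin 4]→ₗ[R] N) (a b c d : M) :
    ρ ![a, c, b, d] = -ρ ![a, b, c, d] := by
  rw [← ρ.map_swap ![a, b, c, d] (show (1 : Fin 4) ≠ 2 by decide)]
  congr 1; funext i; fin_cases i <;> rfl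

theorem AlternatingMap.map_fin4_swap23 (ρ : M [⋀^Fin 4]→ₗ[R] N) (a b c d : M) :
    ρ ![a, b, d, c] = -ρ ![a, b, c, d] := by
  rw [← ρ.map_swap ![a, b, c, d] (show (2 : Fin 4) ≠ 3 by decide)]
  congr 1; funext i; fin_cases i <;> rfl

end Alternating

theorem trip7_eq (a b c i j k : Fin 7) :
    trip7 a b c i j k =
      kd7 a i * kd7 b j * kd7 c k - kd7 a i * kd7 c j * kd7 b k
      - kd7 b i * kd7 a j * kd7 c k + kd7 b i * kd7 c j * kd7 a k
      + kd7 c i * kd7 a j * kd7 b k - kd7 c i * kd7 b j * kd7 a k := by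
  rw [trip7, Matrix.det_fin_three]
  simp only [Matrix.of_apply, Matrix.cons_val', Matrix.cons_val_zero, Matrix.cons_val_one,
    Matrix.cons_val_two, Matrix.empty_val', Matrix.cons_val_fin_one, Matrix.head_cons,
    Matrix.tail_cons, Matrix.head_fin_const]
  ring

theorem sum_mul_trip7 (f : Fin 7 → Fin 7 → Fin 7 → ℝ) (a b c : Fin 7) :
    ∑ i, ∑ j, ∑ k, f i j k * trip7 a b c i j k =
      f a b c - f a c b - f b a c + f b c a + f c a b - f c b a := by
  have delta : ∀ x y z : Fin 7, ∑ i, ∑ j, ∑ k, f i j k * (kd7 x i * kd7 y j * kd7 z k) = f x y z := by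
    intro x y z
    simp [kd7, mul_ite]
  simp only [trip7_eq, mul_add, mul_sub, sum_add_distrib, sum_sub_distrib, delta]

theorem quad7_eq (a b c d p i j k : Fin 7) :
    quad7 a b c d p i j k =
      kd7 a p * trip7 b c d i j k - kd7 b p * trip7 a c d i j k
      + kd7 c p * trip7 a b d i j k - kd7 d p * trip7 a b c i j k := by
  rw [quad7, Matrix.det_succ_column_zero, Fin.sum_univ_four]
  simp [trip7, Matrix.det_fin_three, Fin.succAbove, Fin.lt_def, Fin.succ]
  ring

section Contraction

variable {M : Type*} [AddCommGroup M] [Module ℝ M] (ρ : M [⋀^Fin 4]→ₗ[ℝ] ℝ) (u : Fin 7 → M)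

theorem AlternatingMap.sum_apply_mul_trip7 (v : M) (a b c : Fin 7) :
    ∑ i, ∑ j, ∑ k, ρ ![v, u i, u j, u k] * trip7 a b c i j k = 6 * ρ ![v, u a, u b, u c] := by
  rw [sum_mul_trip7, ρ.map_fin4_swap12 v (u b) (u c) (u a), ρ.map_fin4_swap12 v (u a) (u c) (u b),
    ρ.map_fin4_swap23 v (u b) (u a) (u c), ρ.map_fin4_swap23 v (u a) (u b) (u c),
    ρ.map_fin4_swap12 v (u a) (u b) (u c)]
  ring

theorem AlternatingMap.sum_apply_mul_quad7 (a b c d p : Fin 7) :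
    ∑ i, ∑ j, ∑ k, ρ ![u p, u i, u j, u k] * quad7 a b c d p i j k =
      6 * (kd7 a p + kd7 b p + kd7 c p + kd7 d p) * ρ ![u a, u b, u c, u d] := by
  have kd7_mul {g : Fin 7 → ℝ} (x : Fin 7) : kd7 x p * g p = kd7 x p * g x := by
    by_cases h : x = p <;> simp [kd7, h]
  simp only [quad7_eq, mul_add, mul_sub, sum_add_distrib, sum_sub_distrib, mul_left_comm _ (kd7 _ p),
    ← mul_sum, ρ.sum_apply_mul_trip7]
  simp only [mul_left_comm (kd7 _ p) (6 : ℝ)]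
  rw [kd7_mul (g := fun w => ρ ![u w, u b, u c, u d]) a,
    kd7_mul (g := fun w => ρ ![u w, u a, u c, u d]) b,
    kd7_mul (g := fun w => ρ ![u w, u a, u b, u d]) c,
    kd7_mul (g := fun w => ρ ![u w, u a, u b, u c]) d]
  rw [ρ.map_fin4_swap01 (u a) (u d) (u b) (u c), ρ.map_fin4_swap12 (u a) (u b) (u d) (u c),
    ρ.map_fin4_swap23 (u a) (u b) (u c) (u d), ρ.map_fin4_swap01 (u a) (u c) (u b) (u d),
    ρ.map_fin4_swap12 (u a) (u b) (u c) (u d), ρ.map_fin4_swap01 (u a) (u b) (u c) (u d)]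
  ring

end Contraction

theorem rhoHat_self (ρ : AlternatingMap ℝ E7 ℝ (Fin 4)) (p : Fin 7) :
    rhoHat ρ p p = 6 * (
      (kd7 3 p + kd7 4 p + kd7 5 p + kd7 6 p) * ρ ![e7 3, e7 4, e7 5, e7 6]
      - (kd7 1 p + kd7 2 p + kd7 3 p + kd7 4 p) * ρ ![e7 1, e7 2, e7 3, e7 4]
      + (kd7 1 p + kd7 2 p + kd7 5 p + kd7 6 p) * ρ ![e7 1, e7 2, e7 5, e7 6]
      - (kd7 2 p + kd7 0 p + kd7 3 p + kd7 5 p) * ρ ![e7 2, e7 0, e7 3, e7 5]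
      + (kd7 2 p + kd7 0 p + kd7 6 p + kd7 4 p) * ρ ![e7 2, e7 0, e7 6, e7 4]
      - (kd7 0 p + kd7 1 p + kd7 3 p + kd7 6 p) * ρ ![e7 0, e7 1, e7 3, e7 6]
      + (kd7 0 p + kd7 1 p + kd7 4 p + kd7 5 p) * ρ ![e7 0, e7 1, e7 4, e7 5]) := by
  simp only [rhoHat, psiC, mul_add, mul_sub, sum_add_distrib, sum_sub_distrib,
    ρ.sum_apply_mul_quad7 e7]
  ring

/-- Key trace identity in the proof of Theorem 2.18: the tangential trace of `h`
over the standard coassociative 4-plane `span{e₄,e₅,e₆,e₇}` equals `2 ρ₄₅₆₇`. -/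
theorem trace_identity_coassoc (ρ : AlternatingMap ℝ E7 ℝ (Fin 4)) :
    hRho ρ 3 3 + hRho ρ 4 4 + hRho ρ 5 5 + hRho ρ 6 6 =
      2 * ρ ![e7 3, e7 4, e7 5, e7 6] := by
  simp only [hRho, Fin.sum_univ_seven, rhoHat_self, kd7, Fin.reduceEq, ↓reduceIte]
  ring
end
end

section
/- (Pointwise Smith condition implies weak conformality; Lemma 3.1 and Remark 3.2 at a point) Let 1 ≤ k ≤ n, let L : ℝᵏ → ℝⁿ be a linear map, and let μ be an alternating k-form on ℝⁿ of comass at most one, i.e. μ(w₁,…,w_k)² ≤ det G(w) for all w₁,…,w_k ∈ ℝⁿ, where G(w)_{ij} = ⟨w_i, w_j⟩ is the Gram matrix. Set E = Σ_{i=1}^k ‖L e_i‖², where e₁,…,e_k is the standard basis of ℝᵏ. If μ(L e₁, …, L e_k) = k^{−k/2} · E^{k/2}, then ⟨L x, L y⟩ = (E/k) ⟨x, y⟩ for all x, y ∈ ℝᵏ. -/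
/-! The Gram matrix `G` of `L e₁, …, L e_k` is positive semidefinite with trace `E`, and the
comass bound turns the Smith condition into `det G ≥ (E/k)^k`. Since `det G` and `tr G` are the
product and the sum of the eigenvalues of `G`, this is the equality case of AM–GM: all eigenvalues
equal `E/k`, so `G = (E/k) • 1`, which is conformality of `L` on the standard basis. -/

open scoped RealInnerProductSpace
open Finset

theorem eq_mean_of_mean_pow_card_le_prod {ι : Type*} [Fintype ι] {z : ι → ℝ}
    (hz : ∀ i, 0 ≤ z i)
    (hprod : ((∑ i, z i) / Fintype.card ι) ^ Fintype.card ι ≤ ∏ i, z i) (j : ι) :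
    z j = (∑ i, z i) / Fintype.card ι := by
  have : Nonempty ι := ⟨j⟩
  set k := Fintype.card ι
  have hk : (0 : ℝ) < k := by exact_mod_cast Fintype.card_pos
  set w : ι → ℝ := fun _ ↦ (k : ℝ)⁻¹
  have hw : ∀ i ∈ univ, 0 < w i := fun _ _ ↦ inv_pos.2 hk
  have hw1 : ∑ i, w i = 1 := by
    simp only [w, sum_const, card_univ, nsmul_eq_mul]
    exact mul_inv_cancel₀ hk.ne'
  have hmean : ∑ i, w i * z i = (∑ i, z i) / k := by
    simp only [w, ← mul_sum]; ring
  have hmean_nonneg : 0 ≤ (∑ i, z i) / k := div_nonneg (sum_nonneg fun i _ ↦ hz i) hk.le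
  have hgeom : (∑ i, z i) / k ≤ ∏ i, z i ^ w i := calc
    (∑ i, z i) / k = (((∑ i, z i) / k) ^ k) ^ (k⁻¹ : ℝ) :=
      (Real.pow_rpow_inv_natCast hmean_nonneg Fintype.card_ne_zero).symm
    _ ≤ (∏ i, z i) ^ (k⁻¹ : ℝ) :=
      Real.rpow_le_rpow (pow_nonneg hmean_nonneg k) hprod (inv_nonneg.2 hk.le)
    _ = ∏ i, z i ^ w i := (Real.finsetProd_rpow _ _ (fun i _ ↦ hz i) _).symm
  have hAMGM := Real.geom_mean_le_arith_mean_weighted univ w z (fun i hi ↦ (hw i hi).le) hw1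
    fun i _ ↦ hz i
  rw [← hmean] at hgeom ⊢
  exact (Real.geom_mean_eq_arith_mean_weighted_iff_of_pos' univ w z hw hw1 fun i _ ↦ hz i).1
    (le_antisymm hAMGM hgeom) j (mem_univ j)

theorem Matrix.IsHermitian.eq_smul_one_of_eigenvalues_eq {n : Type*} [Fintype n] [DecidableEq n]
    {A : Matrix n n ℝ} (hA : A.IsHermitian) {c : ℝ} (h : ∀ i, hA.eigenvalues i = c) :
    A = c • 1 := by
  have hdiag : Matrix.diagonal (RCLike.ofReal ∘ hA.eigenvalues) = c • (1 : Matrix n n ℝ) := by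
    ext i j
    simp [Matrix.diagonal_apply, Matrix.one_apply, h]
  rw [hA.spectral_theorem, hdiag, map_smul, map_one]

theorem Matrix.PosSemidef.eq_smul_one_of_trace_div_card_pow_card_le_det {n : Type*} [Fintype n]
    [DecidableEq n] {A : Matrix n n ℝ} (hA : A.PosSemidef)
    (hdet : (A.trace / Fintype.card n) ^ Fintype.card n ≤ A.det) :
    A = (A.trace / Fintype.card n) • 1 := by
  have htrace : A.trace = ∑ i, hA.isHermitian.eigenvalues i := by
    simpa using hA.isHermitian.trace_eq_sum_eigenvalues
  have hprod : A.det = ∏ i, hA.isHermitian.eigenvalues i := by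
    simpa using hA.isHermitian.det_eq_prod_eigenvalues
  refine hA.isHermitian.eq_smul_one_of_eigenvalues_eq fun i ↦ htrace ▸ ?_
  exact eq_mean_of_mean_pow_card_le_prod hA.eigenvalues_nonneg (htrace ▸ hprod ▸ hdet) i

theorem inner_map_map_eq_smul_inner_of_gram_eq_smul_one {ι E F : Type*} [Fintype ι]
    [DecidableEq ι] [NormedAddCommGroup E] [InnerProductSpace ℝ E] [NormedAddCommGroup F]
    [InnerProductSpace ℝ F]
    (b : OrthonormalBasis ι ℝ E) (L : E →ₗ[ℝ] F) {c : ℝ}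
    (h : Matrix.gram ℝ (L ∘ b) = c • 1) (x y : E) : ⟪L x, L y⟫ = c * ⟪x, y⟫ := by
  have : (innerₗ F).compl₁₂ L L = c • innerₗ E := by
    refine LinearMap.ext_basis b.toBasis b.toBasis fun i j ↦ ?_
    have hij := congrFun (congrFun h i) j
    simp only [Matrix.gram_apply, Function.comp_apply, Matrix.smul_apply, Matrix.one_apply] at hij
    simp [hij, orthonormal_iff_ite.1 b.orthonormal]
  exact congrArg (fun B ↦ B x y) this

theorem sq_rpow_neg_half_mul_rpow_half {a b : ℝ} (ha : 0 ≤ a) (hb : 0 ≤ b) (x : ℝ) :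
    (a ^ (-x / 2) * b ^ (x / 2)) ^ 2 = (b / a) ^ x := by
  have hexp : ∀ y : ℝ, y / 2 * (2 : ℕ) = y := fun y ↦ by push_cast; ring
  rw [mul_pow, ← Real.rpow_natCast, ← Real.rpow_natCast, ← Real.rpow_mul ha,
    ← Real.rpow_mul hb, hexp, hexp, Real.rpow_neg ha, Real.div_rpow hb ha, div_eq_inv_mul]

theorem smith_pointwise_weakly_conformal_general (k n : ℕ)
    (L : EuclideanSpace ℝ (Fin k) →ₗ[ℝ] EuclideanSpace ℝ (Fin n))
    (μ : AlternatingMap ℝ (EuclideanSpace ℝ (Fin n)) ℝ (Fin k))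
    (hcomass : ∀ w : Fin k → EuclideanSpace ℝ (Fin n),
      (μ w) ^ 2 ≤ Matrix.det (Matrix.of fun i j : Fin k => ⟪w i, w j⟫))
    (E : ℝ) (hE : E = ∑ i : Fin k, ‖L (EuclideanSpace.single i 1)‖ ^ 2)
    (hSmith : μ (fun i => L (EuclideanSpace.single i 1)) =
      (k : ℝ) ^ (-(k : ℝ) / 2) * E ^ ((k : ℝ) / 2)) :
    ∀ x y : EuclideanSpace ℝ (Fin k), ⟪L x, L y⟫ = (E / k) * ⟪x, y⟫ := by
  set w : Fin k → EuclideanSpace ℝ (Fin n) := fun i ↦ L (EuclideanSpace.single i 1)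
  have htrace : (Matrix.gram ℝ w).trace = E := by
    simp [Matrix.trace, Matrix.gram_apply, hE, w]
  have hdet : (E / k) ^ k ≤ (Matrix.gram ℝ w).det := calc
    (E / k) ^ k = (μ w) ^ 2 := by
      rw [hSmith, sq_rpow_neg_half_mul_rpow_half (Nat.cast_nonneg k)
        (hE ▸ sum_nonneg fun i _ ↦ sq_nonneg _), Real.rpow_natCast]
    _ ≤ (Matrix.gram ℝ w).det := hcomass w
  have hgram := (Matrix.posSemidef_gram ℝ w).eq_smul_one_of_trace_div_card_pow_card_le_det
    (by simpa [htrace] using hdet)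
  rw [htrace, Fintype.card_fin] at hgram
  have hbasis : L ∘ EuclideanSpace.basisFun (Fin k) ℝ = w := funext fun i ↦ by simp [w]
  exact inner_map_map_eq_smul_inner_of_gram_eq_smul_one _ L (hbasis ▸ hgram)

/-- Pointwise Smith condition implies weak conformality (Lemma 3.1 and Remark 3.2 at a
point): if `μ` is an alternating `k`-form on ℝⁿ of comass at most one and the linear map
`L : ℝᵏ → ℝⁿ` satisfies `μ(L e₁, …, L e_k) = k^{−k/2} E^{k/2}` where
`E = Σ_i ‖L e_i‖²`, then `L` is weakly conformal with conformal factor `E/k`. -/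
theorem smith_pointwise_weakly_conformal (k n : ℕ) (hk : 1 ≤ k) (hkn : k ≤ n)
    (L : EuclideanSpace ℝ (Fin k) →ₗ[ℝ] EuclideanSpace ℝ (Fin n))
    (μ : AlternatingMap ℝ (EuclideanSpace ℝ (Fin n)) ℝ (Fin k))
    (hcomass : ∀ w : Fin k → EuclideanSpace ℝ (Fin n),
      (μ w) ^ 2 ≤ Matrix.det (Matrix.of fun i j : Fin k => ⟪w i, w j⟫))
    (E : ℝ) (hE : E = ∑ i : Fin k, ‖L (EuclideanSpace.single i 1)‖ ^ 2)
    (hSmith : μ (fun i => L (EuclideanSpace.single i 1)) =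
      (k : ℝ) ^ (-(k : ℝ) / 2) * E ^ ((k : ℝ) / 2)) :
    ∀ x y : EuclideanSpace ℝ (Fin k), ⟪L x, L y⟫ = (E / k) * ⟪x, y⟫ :=
  smith_pointwise_weakly_conformal_general k n L μ hcomass E hE hSmith
end
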